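/- arXiv:1602.01768 — 2 statements merged into one kernel-verified Lean document; each statement's English description precedes it below -/
import Mathlib

section
/- Let A ∈ ℝ^{n×n} be symmetric and invertible, W ∈ ℝ^{n×n} symmetric positive definite, S ∈ ℝ^{n×q} of full column rank, and X_k ∈ ℝ^{n×n} symmetric. Set Λ := (S^T A W A S)^{-1}. Then X_{k+1} := X_k − (X_k A − I) S Λ S^T A W + W A S Λ S^T (A X_k − I)(A S Λ S^T A W − I) is the unique minimizer of ‖X − X_k‖_{F(W^{-1})} over the set {X ∈ ℝ^{n×n} : S^T A X = S^T and X = X^T}. -/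
/-!
The constraint set is an affine space of symmetric matrices, and `‖·‖_{F(W⁻¹)}` is the norm of
the inner product `⟪X, Y⟫ = tr (Xᵀ W⁻¹ Y W⁻¹)`, which is definite because
`tr (Zᵀ W⁻¹ Z W⁻¹) = ‖C Z C‖²_F` for `C = √(W⁻¹)`. The update `X_{k+1}` is feasible and
`X_{k+1} - X_k` is orthogonal to every direction `Y` of the constraint set (`Y = Yᵀ`,
`Sᵀ A Y = 0`, hence also `Y A S = 0`): in the cross term every `W` cancels a `W⁻¹`, leaving
factors `Sᵀ A Y` or, after cycling the trace, `Y A S`. Pythagoras gives strict minimality.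
-/

open Matrix BigOperators

/-- Squared weighted Frobenius norm: `‖X‖_{F(W⁻¹)}² = Tr(Xᵀ W⁻¹ X W⁻¹)`. -/
noncomputable def wFNormSq {n : ℕ} (W X : Matrix (Fin n) (Fin n) ℝ) : ℝ :=
  (Xᵀ * W⁻¹ * X * W⁻¹).trace

/-- Weighted Frobenius norm `‖X‖_{F(W⁻¹)}`. -/
noncomputable def wFNorm {n : ℕ} (W X : Matrix (Fin n) (Fin n) ℝ) : ℝ :=
  Real.sqrt (wFNormSq W X)

namespace Matrix

theorem mulVec_injective_of_rank_eq_card {m k K : Type*} [Fintype k] [Field K]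
    {S : Matrix m k K} (hS : S.rank = Fintype.card k) : Function.Injective S.mulVec := by
  rw [mulVec_injective_iff, linearIndependent_iff_card_eq_finrank_span]
  exact hS.symm.trans S.rank_eq_finrank_span_cols

open scoped MatrixOrder in
theorem PosDef.trace_transpose_mul_mul_mul_pos {m : Type*} [Fintype m] [DecidableEq m]
    {P Z : Matrix m m ℝ} (hP : P.PosDef) (hZ : Z ≠ 0) : 0 < (Zᵀ * P * Z * P).trace := by
  set C := CFC.sqrt P
  have hCC : C * C = P := CFC.sqrt_mul_sqrt_self P hP.posSemidef.nonneg
  have hC : IsUnit C := (CFC.isUnit_sqrt_iff P hP.posSemidef.nonneg).2 hP.isUnit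
  have hCt : Cᵀ = C := (CFC.sqrt_nonneg P).posSemidef.isHermitian
  have htrace : (Zᵀ * P * Z * P).trace = ((C * Z * C)ᵀ * (C * Z * C)).trace := by
    rw [← hCC, transpose_mul, transpose_mul, hCt]
    simp only [Matrix.mul_assoc]
    rw [trace_mul_comm C]
    simp only [Matrix.mul_assoc]
  have hCZC : C * Z * C ≠ 0 := by
    rwa [Ne, hC.mul_left_eq_zero, hC.mul_right_eq_zero]
  rw [htrace, ← conjTranspose_eq_transpose_of_trivial]
  exact (posSemidef_conjTranspose_mul_self _).trace_nonneg.lt_of_ne'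
    (trace_conjTranspose_mul_self_eq_zero_iff.not.2 hCZC)

end Matrix

section SketchUpdate

variable {R m k : Type*} [CommRing R] [Fintype m] [Fintype k] [DecidableEq m]

def sketchUpdate (A W : Matrix m m R) (S : Matrix m k R) (Λ : Matrix k k R)
    (X : Matrix m m R) : Matrix m m R :=
  X - (X * A - 1) * S * Λ * Sᵀ * A * W +
    W * A * S * Λ * Sᵀ * (A * X - 1) * (A * S * Λ * Sᵀ * A * W - 1)

variable {A W X Y : Matrix m m R} {S : Matrix m k R} {Λ : Matrix k k R}

theorem transpose_mul_mul_sketchUpdate [DecidableEq k] (hΛ : Sᵀ * A * W * A * S * Λ = 1) :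
    Sᵀ * A * sketchUpdate A W S Λ X = Sᵀ := by
  have hΛT : ∀ T : Matrix k m R, Sᵀ * (A * (W * (A * (S * (Λ * T))))) = T := fun T => by
    simp only [← Matrix.mul_assoc, hΛ, Matrix.one_mul]
  simp only [sketchUpdate, Matrix.mul_sub, Matrix.sub_mul, Matrix.mul_add, Matrix.mul_one,
    Matrix.one_mul, Matrix.mul_assoc, hΛT]
  abel

theorem sketchUpdate_transpose (hA : Aᵀ = A) (hW : Wᵀ = W) (hΛ : Λᵀ = Λ) (hX : Xᵀ = X) :
    (sketchUpdate A W S Λ X)ᵀ = sketchUpdate A W S Λ X := by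
  simp only [sketchUpdate, transpose_add, transpose_sub, transpose_mul,
    transpose_transpose, hA, hW, hΛ, hX, Matrix.mul_sub, Matrix.sub_mul, Matrix.mul_one,
    Matrix.one_mul, Matrix.mul_assoc]
  abel

theorem trace_sketchUpdate_sub_mul_eq_zero (hW : IsUnit W.det) (hSY : Sᵀ * A * Y = 0)
    (hYS : Y * A * S = 0) :
    ((sketchUpdate A W S Λ X - X) * W⁻¹ * Y * W⁻¹).trace = 0 := by
  have hWW : ∀ T : Matrix m m R, W * (W⁻¹ * T) = T := fun T => by
    rw [← Matrix.mul_assoc, mul_nonsing_inv W hW, Matrix.one_mul]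
  have hSYT : ∀ T : Matrix m m R, Sᵀ * (A * (Y * T)) = 0 := fun T => by
    simp only [← Matrix.mul_assoc, hSY, Matrix.zero_mul]
  have hcross : (sketchUpdate A W S Λ X - X) * W⁻¹ * Y * W⁻¹ =
      -(W * A * S * (Λ * Sᵀ * (A * X - 1) * W⁻¹ * Y * W⁻¹)) := by
    simp only [sketchUpdate, Matrix.mul_sub, Matrix.sub_mul, Matrix.add_mul, Matrix.mul_one,
      Matrix.one_mul, Matrix.mul_assoc, hWW, hSYT, Matrix.mul_zero]
    abel
  rw [hcross, trace_neg, trace_mul_comm, neg_eq_zero]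
  simp only [Matrix.mul_assoc, nonsing_inv_mul_cancel_left W _ hW, ← Matrix.mul_assoc Y, hYS,
    Matrix.mul_zero, trace_zero]

end SketchUpdate

variable {n : ℕ} {W D Y : Matrix (Fin n) (Fin n) ℝ}

theorem wFNormSq_pos (hW : W.PosDef) (hY : Y ≠ 0) : 0 < wFNormSq W Y :=
  hW.inv.trace_transpose_mul_mul_mul_pos hY

theorem wFNormSq_nonneg (hW : W.PosDef) (Y : Matrix (Fin n) (Fin n) ℝ) : 0 ≤ wFNormSq W Y := by
  rcases eq_or_ne Y 0 with rfl | hY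
  · simp [wFNormSq]
  · exact (wFNormSq_pos hW hY).le

theorem wFNormSq_add_of_trace_eq_zero (hW : Wᵀ = W) (h : (Dᵀ * W⁻¹ * Y * W⁻¹).trace = 0) :
    wFNormSq W (D + Y) = wFNormSq W D + wFNormSq W Y := by
  have h' : (Yᵀ * W⁻¹ * D * W⁻¹).trace = 0 := by
    rw [← trace_transpose]
    simp only [transpose_mul, transpose_transpose, transpose_nonsing_inv, hW, Matrix.mul_assoc]
    rw [trace_mul_comm]
    simpa only [Matrix.mul_assoc] using h
  simp only [wFNormSq, transpose_add, Matrix.add_mul, Matrix.mul_add, trace_add, h, h']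
  ring

theorem wFNorm_lt_wFNorm_add_of_trace_eq_zero (hW : W.PosDef)
    (h : (Dᵀ * W⁻¹ * Y * W⁻¹).trace = 0) (hY : Y ≠ 0) : wFNorm W D < wFNorm W (D + Y) := by
  refine Real.sqrt_lt_sqrt (wFNormSq_nonneg hW D) ?_
  rw [wFNormSq_add_of_trace_eq_zero (W := W) hW.isHermitian h]
  linarith [wFNormSq_pos hW hY]

theorem stmt3 {n q : ℕ} (A W : Matrix (Fin n) (Fin n) ℝ)
    (S : Matrix (Fin n) (Fin q) ℝ) (Xk : Matrix (Fin n) (Fin n) ℝ)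
    (hA : IsUnit A.det) (hAsym : Aᵀ = A) (hW : W.PosDef) (hS : S.rank = q)
    (hXk : Xkᵀ = Xk) :
    let Λ := (Sᵀ * A * W * A * S)⁻¹
    let Xnext := Xk - (Xk * A - 1) * S * Λ * Sᵀ * A * W +
      W * A * S * Λ * Sᵀ * (A * Xk - 1) * (A * S * Λ * Sᵀ * A * W - 1)
    (Sᵀ * A * Xnext = Sᵀ ∧ Xnext = Xnextᵀ) ∧
    ∀ X : Matrix (Fin n) (Fin n) ℝ, Sᵀ * A * X = Sᵀ → X = Xᵀ → X ≠ Xnext →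
      wFNorm W (Xnext - Xk) < wFNorm W (X - Xk) := by
  intro Λ Xnext
  have hAS : Function.Injective (A * S).mulVec := fun x y hxy =>
    mulVec_injective_of_rank_eq_card (hS.trans (Fintype.card_fin q).symm)
      (mulVec_injective_iff_isUnit.2 ((isUnit_iff_isUnit_det A).2 hA)
        (by simpa only [mulVec_mulVec] using hxy))
  have hM : (Sᵀ * A * W * A * S).PosDef := by
    simpa [conjTranspose_eq_transpose_of_trivial, hAsym, Matrix.mul_assoc] using
      hW.conjTranspose_mul_mul_same hAS
  have hΛ : Sᵀ * A * W * A * S * Λ = 1 := mul_nonsing_inv _ hM.det_pos.ne'.isUnit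
  have hΛsym : Λᵀ = Λ := by
    rw [transpose_nonsing_inv]
    exact congr_arg Inv.inv hM.isHermitian
  have hfeas : Sᵀ * A * Xnext = Sᵀ := transpose_mul_mul_sketchUpdate hΛ
  have hsymm : Xnextᵀ = Xnext := sketchUpdate_transpose hAsym hW.isHermitian hΛsym hXk
  refine ⟨⟨hfeas, hsymm.symm⟩, fun X hX hXsym hne => ?_⟩
  have hSY : Sᵀ * A * (X - Xnext) = 0 := by rw [Matrix.mul_sub, hX, hfeas, sub_self]
  have hYS : (X - Xnext) * A * S = 0 := by
    simpa [transpose_sub, ← hXsym, hsymm, hAsym, Matrix.mul_assoc] using congr_arg transpose hSY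
  have horth : ((Xnext - Xk)ᵀ * W⁻¹ * (X - Xnext) * W⁻¹).trace = 0 := by
    rw [transpose_sub, hsymm, hXk]
    exact trace_sketchUpdate_sub_mul_eq_zero hW.det_pos.ne'.isUnit hSY hYS
  simpa using wFNorm_lt_wFNorm_add_of_trace_eq_zero hW horth (sub_ne_zero.2 hne)
end

section
/- Let A ∈ ℝ^{n×n} be symmetric positive definite, let X ∈ ℝ^{n×n} be symmetric positive definite, and let S ∈ ℝ^{n×q} have full column rank. Set P := S (S^T A S)^{-1} S^T. Then the randomized BFGS update X⁺ := P + (I − P A) X (I − A P) is symmetric positive definite. -/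
/-!
Writing `P = S (Sᵀ A S)⁻¹ Sᵀ`, both `P` and `(I - P A) X (I - A P)` are positive semidefinite,
so `X⁺` is positive definite as soon as no nonzero `v` has `P v = 0` and `(I - A P) v = 0`.
But such a `v` satisfies `v = (I - A P) v + A (P v) = 0`.
-/

open Matrix BigOperators

namespace Matrix

theorem mulVec_injective_of_rank_eq_card_s19 {m n K : Type*} [Fintype m] [Fintype n] [Field K]
    {A : Matrix m n K} (h : A.rank = Fintype.card n) : Function.Injective A.mulVec := by
  rw [mulVec_injective_iff, linearIndependent_iff_card_eq_finrank_span, ← h,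
    rank_eq_finrank_span_cols]
  rfl

open scoped ComplexOrder

variable {n 𝕜 : Type*} [Fintype n] [RCLike 𝕜]

theorem PosSemidef.add_conjTranspose_mul_mul_posDef {P X C : Matrix n n 𝕜}
    (hP : P.PosSemidef) (hX : X.PosDef) (hker : ∀ v, P *ᵥ v = 0 → C *ᵥ v = 0 → v = 0) :
    (P + Cᴴ * X * C).PosDef := by
  refine PosDef.of_dotProduct_mulVec_pos
    (hP.isHermitian.add (isHermitian_conjTranspose_mul_mul C hX.isHermitian)) fun v hv => ?_
  have hsplit : star v ⬝ᵥ (P + Cᴴ * X * C) *ᵥ v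
      = star v ⬝ᵥ P *ᵥ v + star (C *ᵥ v) ⬝ᵥ X *ᵥ (C *ᵥ v) := by
    simp only [add_mulVec, dotProduct_add, star_mulVec, dotProduct_mulVec, vecMul_vecMul,
      ← mulVec_mulVec]
  rw [hsplit]
  by_cases hCv : C *ᵥ v = 0
  · have hPv : 0 < star v ⬝ᵥ P *ᵥ v :=
      (hP.dotProduct_mulVec_nonneg v).lt_of_ne'
        fun h => hv (hker v ((hP.dotProduct_mulVec_zero_iff v).mp h) hCv)
    simpa [hCv] using hPv
  · exact add_pos_of_nonneg_of_pos (hP.dotProduct_mulVec_nonneg v) (hX.dotProduct_mulVec_pos hCv)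

theorem PosSemidef.add_conjTranspose_one_sub_mul_mul_posDef [DecidableEq n] {P X : Matrix n n 𝕜}
    (hP : P.PosSemidef) (hX : X.PosDef) (A : Matrix n n 𝕜) :
    (P + (1 - A * P)ᴴ * X * (1 - A * P)).PosDef :=
  hP.add_conjTranspose_mul_mul_posDef hX fun v hPv hCv => by
    simpa [sub_mulVec, ← mulVec_mulVec, hPv] using hCv

end Matrix

theorem stmt19 {n q : ℕ} (A X : Matrix (Fin n) (Fin n) ℝ)
    (S : Matrix (Fin n) (Fin q) ℝ)
    (hA : A.PosDef) (hX : X.PosDef) (hS : S.rank = q) :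
    let P := S * (Sᵀ * A * S)⁻¹ * Sᵀ
    (P + (1 - P * A) * X * (1 - A * P)).PosDef := by
  intro P
  have hSAS : (Sᵀ * A * S).PosDef := by
    rw [← conjTranspose_eq_transpose_of_trivial]
    exact hA.conjTranspose_mul_mul_same
      (mulVec_injective_of_rank_eq_card_s19 (hS.trans (Fintype.card_fin q).symm))
  have hP : P.PosSemidef := by
    have := hSAS.inv.posSemidef.mul_mul_conjTranspose_same S
    rwa [conjTranspose_eq_transpose_of_trivial] at this
  have hadj : (1 - A * P)ᴴ = 1 - P * A := by
    rw [conjTranspose_sub, conjTranspose_one, conjTranspose_mul, hP.isHermitian.eq,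
      hA.isHermitian.eq]
  have := hP.add_conjTranspose_one_sub_mul_mul_posDef hX A
  rwa [hadj] at this
end
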